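/- Let a, b, c be real numbers with b ≠ 0, and let a₀, a₁ : ℝ → ℝ be twice continuously differentiable. Define φ(x̄) = (x̄ − c(1 + a·x̄))/(b(1 + a·x̄)), t(x̄) = 1 + a·x̄, ā₁(x̄) = a₁(φ(x̄))/(b³ t(x̄)⁶), and ā₀(x̄) = a₀(φ(x̄))/(b⁴ t(x̄)⁸) − 3a·a₁(φ(x̄))/(b³ t(x̄)⁷) on {x̄ : t(x̄) ≠ 0}. Then for every x̄ with t(x̄) ≠ 0 and a₁(φ(x̄)) ≠ 0, one has (16ā₀(x̄)³ + 48ā₀(x̄)²ā₁′(x̄) + 9ā₁(x̄)²ā₀″(x̄) − 9ā₀(x̄)ā₁(x̄)(6ā₀′(x̄) + ā₁″(x̄)))/(9ā₁(x̄)⁴) = (16a₀³ + 48a₀²a₁′ + 9a₁²a₀″ − 9a₀a₁(6a₀′ + a₁″))/(9a₁⁴) evaluated at φ(x̄). -/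

import Mathlib

/-! The Möbius map `φ` has `φ' = 1 / (b t²)` with `t = 1 + a x̄`, so differentiating a
coefficient of the form `f(φ(x̄)) / (bᵏ tᵐ)` gives two terms of the same form, with weights
`(k + 1, m + 2)` and `(k, m + 1)`. Hence the 2-jets of `ā₀, ā₁` are explicit combinations of the
2-jets of `a₀, a₁` at `φ(x̄)`, and substituting them into `Ψ₄^{2,4}` is a rational identity in
which all powers of `b` and `t` and all terms carrying `a` cancel. -/

/-- The point transformation of the independent variable:
`φ(x̄) = (x̄ − c(1 + a x̄)) / (b(1 + a x̄))`. -/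
noncomputable def phi (a b c : ℝ) (x : ℝ) : ℝ :=
  (x - c * (1 + a * x)) / (b * (1 + a * x))

/-- The transformed coefficient `ā₁(x̄) = a₁(φ(x̄)) / (b³ (1 + a x̄)⁶)`
for the canonical form `y⁽⁴⁾ + a₁ y′ + a₀ y = 0`. -/
noncomputable def abar1 (a b c : ℝ) (a1 : ℝ → ℝ) (x : ℝ) : ℝ :=
  a1 (phi a b c x) / (b ^ 3 * (1 + a * x) ^ 6)

/-- The transformed coefficient
`ā₀(x̄) = a₀(φ(x̄))/(b⁴ (1+a x̄)⁸) − 3a a₁(φ(x̄))/(b³ (1+a x̄)⁷)`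
for the canonical form `y⁽⁴⁾ + a₁ y′ + a₀ y = 0`. -/
noncomputable def abar0 (a b c : ℝ) (a0 a1 : ℝ → ℝ) (x : ℝ) : ℝ :=
  a0 (phi a b c x) / (b ^ 4 * (1 + a * x) ^ 8)
    - 3 * a * a1 (phi a b c x) / (b ^ 3 * (1 + a * x) ^ 7)

open Topology

section PhiPullback

variable (a b c : ℝ)

noncomputable def phiPullback (k m : ℕ) (f : ℝ → ℝ) (x : ℝ) : ℝ :=
  f (phi a b c x) / (b ^ k * (1 + a * x) ^ m)

variable {a b c} {x : ℝ}

lemma hasDerivAt_phi (hb : b ≠ 0) (ht : 1 + a * x ≠ 0) :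
    HasDerivAt (phi a b c) (1 / (b * (1 + a * x) ^ 2)) x := by
  have ht' : HasDerivAt (fun x : ℝ => 1 + a * x) a x := by
    simpa using ((hasDerivAt_id x).const_mul a).const_add 1
  have hnum : HasDerivAt (fun x : ℝ => x - c * (1 + a * x)) (1 - c * a) x :=
    (hasDerivAt_id' x).fun_sub (ht'.const_mul c)
  refine (hnum.div (ht'.const_mul b) (mul_ne_zero hb ht)).congr_deriv ?_
  field_simp
  ring

lemma contDiffAt_phiPullback {n : WithTop ℕ∞} {f : ℝ → ℝ} (k m : ℕ) (hb : b ≠ 0)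
    (ht : 1 + a * x ≠ 0) (hf : ContDiffAt ℝ n f (phi a b c x)) :
    ContDiffAt ℝ n (phiPullback a b c k m f) x := by
  have hphi : ContDiffAt ℝ n (phi a b c) x := by
    unfold phi
    exact (by fun_prop : ContDiffAt ℝ n (fun x => x - c * (1 + a * x)) x).div (by fun_prop)
      (mul_ne_zero hb ht)
  exact (hf.comp x hphi).div (by fun_prop) (mul_ne_zero (pow_ne_zero _ hb) (pow_ne_zero _ ht))

lemma hasDerivAt_phiPullback {f : ℝ → ℝ} (k m : ℕ) (hb : b ≠ 0) (ht : 1 + a * x ≠ 0)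
    (hf : DifferentiableAt ℝ f (phi a b c x)) :
    HasDerivAt (phiPullback a b c k m f)
      (phiPullback a b c (k + 1) (m + 2) (deriv f) x
        - m * a * phiPullback a b c k (m + 1) f x) x := by
  have hden : HasDerivAt (fun x : ℝ => b ^ k * (1 + a * x) ^ m)
      (b ^ k * (m * (1 + a * x) ^ (m - 1) * a)) x := by
    simpa using ((((hasDerivAt_id x).const_mul a).const_add 1).pow m).const_mul (b ^ k)
  refine ((hf.hasDerivAt.comp x (hasDerivAt_phi hb ht)).div hden
    (mul_ne_zero (pow_ne_zero _ hb) (pow_ne_zero _ ht))).congr_deriv ?_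
  unfold phiPullback
  rcases m with _ | m
  · field_simp
    ring
  · simp only [Function.comp_apply, Nat.add_sub_cancel]
    field_simp
    ring

lemma deriv_phiPullback_eventuallyEq {f : ℝ → ℝ} (k m : ℕ) (hb : b ≠ 0) (ht : 1 + a * x ≠ 0)
    (hf : Differentiable ℝ f) :
    deriv (phiPullback a b c k m f) =ᶠ[𝓝 x] fun y =>
      phiPullback a b c (k + 1) (m + 2) (deriv f) y - m * a * phiPullback a b c k (m + 1) f y := by
  have hopen : IsOpen {y : ℝ | 1 + a * y ≠ 0} :=
    isOpen_ne_fun (by fun_prop) continuous_const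
  filter_upwards [hopen.mem_nhds ht] with y hy
  exact (hasDerivAt_phiPullback k m hb hy (hf _)).deriv

lemma iteratedDeriv_two_phiPullback {f : ℝ → ℝ} (k m : ℕ) (hb : b ≠ 0) (ht : 1 + a * x ≠ 0)
    (hf : Differentiable ℝ f) (hf' : DifferentiableAt ℝ (deriv f) (phi a b c x)) :
    iteratedDeriv 2 (phiPullback a b c k m f) x =
      phiPullback a b c (k + 2) (m + 4) (deriv (deriv f)) x
        - (2 * m + 2) * a * phiPullback a b c (k + 1) (m + 3) (deriv f) x
        + m * (m + 1) * a ^ 2 * phiPullback a b c k (m + 2) f x := by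
  rw [iteratedDeriv_succ, iteratedDeriv_one,
    (deriv_phiPullback_eventuallyEq k m hb ht hf).deriv_eq,
    ((hasDerivAt_phiPullback (k + 1) (m + 2) hb ht hf').fun_sub
      ((hasDerivAt_phiPullback k (m + 1) hb ht (hf _)).const_mul (m * a))).deriv]
  push_cast
  ring

end PhiPullback

section Jets

variable {a b c x : ℝ} {a0 a1 : ℝ → ℝ}

lemma abar0_eq_phiPullback :
    abar0 a b c a0 a1 =
      fun x => phiPullback a b c 4 8 a0 x - 3 * a * phiPullback a b c 3 7 a1 x := by
  funext x
  simp only [abar0, phiPullback, mul_div_assoc]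

lemma abar1_eq_phiPullback : abar1 a b c a1 = phiPullback a b c 3 6 a1 := rfl

lemma deriv_abar1 (hb : b ≠ 0) (ht : 1 + a * x ≠ 0) (ha1 : DifferentiableAt ℝ a1 (phi a b c x)) :
    deriv (abar1 a b c a1) x =
      phiPullback a b c 4 8 (deriv a1) x - 6 * a * phiPullback a b c 3 7 a1 x := by
  rw [abar1_eq_phiPullback, (hasDerivAt_phiPullback 3 6 hb ht ha1).deriv]
  norm_num

lemma iteratedDeriv_two_abar1 (hb : b ≠ 0) (ht : 1 + a * x ≠ 0) (ha1 : ContDiff ℝ 2 a1) :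
    iteratedDeriv 2 (abar1 a b c a1) x =
      phiPullback a b c 5 10 (deriv (deriv a1)) x - 14 * a * phiPullback a b c 4 9 (deriv a1) x
        + 42 * a ^ 2 * phiPullback a b c 3 8 a1 x := by
  rw [abar1_eq_phiPullback, iteratedDeriv_two_phiPullback 3 6 hb ht
    (ha1.differentiable two_ne_zero) (ha1.differentiable_deriv_two _)]
  norm_num

lemma deriv_abar0 (hb : b ≠ 0) (ht : 1 + a * x ≠ 0) (ha0 : DifferentiableAt ℝ a0 (phi a b c x))
    (ha1 : DifferentiableAt ℝ a1 (phi a b c x)) :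
    deriv (abar0 a b c a0 a1) x =
      phiPullback a b c 5 10 (deriv a0) x - 8 * a * phiPullback a b c 4 9 a0 x
        - 3 * a * (phiPullback a b c 4 9 (deriv a1) x - 7 * a * phiPullback a b c 3 8 a1 x) := by
  rw [abar0_eq_phiPullback, ((hasDerivAt_phiPullback 4 8 hb ht ha0).fun_sub
    ((hasDerivAt_phiPullback 3 7 hb ht ha1).const_mul (3 * a))).deriv]
  norm_num

lemma iteratedDeriv_two_abar0 (hb : b ≠ 0) (ht : 1 + a * x ≠ 0) (ha0 : ContDiff ℝ 2 a0)
    (ha1 : ContDiff ℝ 2 a1) :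
    iteratedDeriv 2 (abar0 a b c a0 a1) x =
      phiPullback a b c 6 12 (deriv (deriv a0)) x - 18 * a * phiPullback a b c 5 11 (deriv a0) x
        + 72 * a ^ 2 * phiPullback a b c 4 10 a0 x
        - 3 * a * (phiPullback a b c 5 11 (deriv (deriv a1)) x
          - 16 * a * phiPullback a b c 4 10 (deriv a1) x
          + 56 * a ^ 2 * phiPullback a b c 3 9 a1 x) := by
  rw [abar0_eq_phiPullback,
    iteratedDeriv_fun_sub (contDiffAt_phiPullback 4 8 hb ht ha0.contDiffAt)
      (contDiffAt_const.mul (contDiffAt_phiPullback 3 7 hb ht ha1.contDiffAt)),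
    iteratedDeriv_const_mul_field,
    iteratedDeriv_two_phiPullback 4 8 hb ht (ha0.differentiable two_ne_zero)
      (ha0.differentiable_deriv_two _),
    iteratedDeriv_two_phiPullback 3 7 hb ht (ha1.differentiable two_ne_zero)
      (ha1.differentiable_deriv_two _)]
  norm_num

end Jets

-- `Ψ₄^{2,4}` as a function of the 2-jets `(a₀, a₁, a₀′, a₁′, a₀″, a₁″)`.
noncomputable def psi (A0 A1 A0' A1' A0'' A1'' : ℝ) : ℝ :=
  (16 * A0 ^ 3 + 48 * A0 ^ 2 * A1' + 9 * A1 ^ 2 * A0'' - 9 * A0 * A1 * (6 * A0' + A1'')) /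
    (9 * A1 ^ 4)

lemma psi_jet_transform (a b T A0 A1 A0' A1' A0'' A1'' : ℝ) (hb : b ≠ 0) (hT : T ≠ 0)
    (hA1 : A1 ≠ 0) :
    psi (A0 / (b ^ 4 * T ^ 8) - 3 * a * A1 / (b ^ 3 * T ^ 7)) (A1 / (b ^ 3 * T ^ 6))
      (A0' / (b ^ 5 * T ^ 10) - 8 * a * (A0 / (b ^ 4 * T ^ 9))
        - 3 * a * (A1' / (b ^ 4 * T ^ 9) - 7 * a * (A1 / (b ^ 3 * T ^ 8))))
      (A1' / (b ^ 4 * T ^ 8) - 6 * a * (A1 / (b ^ 3 * T ^ 7)))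
      (A0'' / (b ^ 6 * T ^ 12) - 18 * a * (A0' / (b ^ 5 * T ^ 11))
        + 72 * a ^ 2 * (A0 / (b ^ 4 * T ^ 10))
        - 3 * a * (A1'' / (b ^ 5 * T ^ 11) - 16 * a * (A1' / (b ^ 4 * T ^ 10))
          + 56 * a ^ 2 * (A1 / (b ^ 3 * T ^ 9))))
      (A1'' / (b ^ 5 * T ^ 10) - 14 * a * (A1' / (b ^ 4 * T ^ 9))
        + 42 * a ^ 2 * (A1 / (b ^ 3 * T ^ 8)))
    = psi A0 A1 A0' A1' A0'' A1'' := by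
  unfold psi
  field_simp
  ring

/-- the invariant
`Ψ₄^{2,4} = (16a₀³ + 48a₀²a₁′ + 9a₁²a₀″ − 9a₀a₁(6a₀′ + a₁″))/(9a₁⁴)` of the
canonical form `y⁽⁴⁾ + a₁ y′ + a₀ y = 0` is an absolute invariant of the
structure invariance group. -/
theorem stmt_16 (a b c : ℝ) (hb : b ≠ 0) (a0 a1 : ℝ → ℝ)
    (ha0 : ContDiff ℝ 2 a0) (ha1 : ContDiff ℝ 2 a1) :
    ∀ xb : ℝ, 1 + a * xb ≠ 0 → a1 (phi a b c xb) ≠ 0 →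
      (16 * (abar0 a b c a0 a1 xb) ^ 3
          + 48 * (abar0 a b c a0 a1 xb) ^ 2 * deriv (abar1 a b c a1) xb
          + 9 * (abar1 a b c a1 xb) ^ 2 * iteratedDeriv 2 (abar0 a b c a0 a1) xb
          - 9 * abar0 a b c a0 a1 xb * abar1 a b c a1 xb
              * (6 * deriv (abar0 a b c a0 a1) xb
                  + iteratedDeriv 2 (abar1 a b c a1) xb))
        / (9 * (abar1 a b c a1 xb) ^ 4)
      = (16 * (a0 (phi a b c xb)) ^ 3
          + 48 * (a0 (phi a b c xb)) ^ 2 * deriv a1 (phi a b c xb)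
          + 9 * (a1 (phi a b c xb)) ^ 2 * iteratedDeriv 2 a0 (phi a b c xb)
          - 9 * a0 (phi a b c xb) * a1 (phi a b c xb)
              * (6 * deriv a0 (phi a b c xb)
                  + iteratedDeriv 2 a1 (phi a b c xb)))
        / (9 * (a1 (phi a b c xb)) ^ 4) := by
  intro x ht hA1
  have hd0 : DifferentiableAt ℝ a0 (phi a b c x) := ha0.differentiable two_ne_zero _
  have hd1 : DifferentiableAt ℝ a1 (phi a b c x) := ha1.differentiable two_ne_zero _
  change psi _ _ _ _ _ _ = psi _ _ _ _ _ _
  rw [deriv_abar0 hb ht hd0 hd1, deriv_abar1 hb ht hd1, iteratedDeriv_two_abar0 hb ht ha0 ha1,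
    iteratedDeriv_two_abar1 hb ht ha1]
  simp only [iteratedDeriv_succ, iteratedDeriv_zero]
  exact psi_jet_transform a b (1 + a * x) _ _ _ _ _ _ hb ht hA1
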